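/- arXiv:1312.6366 — 2 statements merged into one kernel-verified Lean document; each statement's English description precedes it below -/
import Mathlib

section
/- Neveu's exchange formula (mass-transport principle): Let μ and μ' be invariant random measures on ℝ^d with positive and finite intensities γ_μ and γ_{μ'}, and let h : Ω × ℝ^d → [0,∞) be measurable. Then γ_μ ∫∫ h(θ_x ω, −x) μ'(ω, dx) ℙ^0_μ(dω) = γ_{μ'} ∫∫ h(ω, x) μ(ω, dx) ℙ^0_{μ'}(dω). -/
/-!
Write `m(ω, z, x) = h(θ_x ω, z - x)` for the mass that the point `x` of `μ'` sends to the point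
`z` of `μ`. Unfolding the Palm measures, the left side is the mass `𝔼 ∫∫ 1_C(z) m μ'(dx) μ(dz)`
received by the unit cube `C` and the right side is the mass `𝔼 ∫∫ 1_C(x) m μ'(dx) μ(dz)` sent out
of `C`. Both `m` and the Campbell measure `ℙ ⊗ (μ × μ')` are invariant under the diagonal shift
`(ω, z, x) ↦ (θ_u ω, z - u, x - u)`. Inserting `1 = ∫ 1_C(x + u) du`, shifting by `u` and
integrating out `∫ 1_C(z - u) du = 1` turns the received mass into the sent mass.
-/

open MeasureTheory Set Filter
open scoped ENNReal Pointwise Topology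

noncomputable section

abbrev Euc (d : ℕ) : Type := EuclideanSpace ℝ (Fin d)

def unitCube (d : ℕ) : Set (Euc d) := {x | ∀ i, x i ∈ Set.Icc (0 : ℝ) 1}

namespace ProbabilityTheory.Kernel

variable {α β : Type*} [MeasurableSpace α] [MeasurableSpace β]

lemma isSFiniteKernel_of_forall_measure_univ_ne_top (κ : Kernel α β)
    (hκ : ∀ a, κ a univ ≠ ∞) : IsSFiniteKernel κ := by
  classical
  set t : ℕ → Set α := fun n => {a | κ a univ < n}
  have ht : ∀ n, MeasurableSet (t n) := fun n =>
    measurableSet_lt (κ.measurable_coe .univ) measurable_const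
  have hmem : ∀ a, ∃ n, a ∈ disjointed t n := fun a => by
    obtain ⟨n, hn⟩ := ENNReal.exists_nat_gt (hκ a)
    have : a ∈ ⋃ n, disjointed t n := by rw [iUnion_disjointed]; exact mem_iUnion.2 ⟨n, hn⟩
    exact mem_iUnion.1 this
  refine ⟨⟨fun n => piecewise (MeasurableSet.disjointed ht n) κ 0, fun n => ⟨⟨n, ?_, ?_⟩⟩, ?_⟩⟩
  · exact ENNReal.natCast_lt_top n
  · intro a
    rw [piecewise_apply]
    split_ifs with ha
    · exact (disjointed_subset t n ha).le
    · simp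
  · ext a s hs
    obtain ⟨n, hn⟩ := hmem a
    rw [sum_apply' _ _ hs, tsum_eq_single n, piecewise_apply', if_pos hn]
    intro m hm
    have : a ∉ disjointed t m := fun ha => (disjoint_disjointed t hm).le_bot ⟨ha, hn⟩
    rw [piecewise_apply', if_neg this, zero_apply, Measure.coe_zero, Pi.zero_apply]

lemma isSFiniteKernel_of_iUnion_eq_univ (κ : Kernel α β) {s : ℕ → Set β}
    (hs : ∀ n, MeasurableSet (s n)) (hs_univ : ⋃ n, s n = univ)
    (hκ : ∀ n a, κ a (s n) ≠ ∞) : IsSFiniteKernel κ := by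
  have hκ_sum : κ = Kernel.sum fun n => κ.restrict (MeasurableSet.disjointed hs n) := by
    ext1 a
    rw [sum_apply]
    simp_rw [restrict_apply]
    rw [← Measure.restrict_iUnion (disjoint_disjointed s) (MeasurableSet.disjointed hs),
      iUnion_disjointed, hs_univ, Measure.restrict_univ]
  rw [hκ_sum]
  refine isSFiniteKernel_sum_of_denumerable fun n =>
    isSFiniteKernel_of_forall_measure_univ_ne_top _ fun a => ?_
  rw [restrict_apply, Measure.restrict_apply_univ]
  exact ne_top_of_le_ne_top (hκ n a) (measure_mono (disjointed_subset s n))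

lemma isSFiniteKernel_of_isFiniteMeasureOnCompacts [TopologicalSpace β] [SigmaCompactSpace β]
    [T2Space β] [OpensMeasurableSpace β] (κ : Kernel α β)
    (hκ : ∀ a, IsFiniteMeasureOnCompacts (κ a)) : IsSFiniteKernel κ :=
  isSFiniteKernel_of_iUnion_eq_univ κ (fun n => (isCompact_compactCovering β n).measurableSet)
    (iUnion_compactCovering β) fun n _ => (isCompact_compactCovering β n).measure_ne_top

end ProbabilityTheory.Kernel

open ProbabilityTheory

lemma MeasureTheory.Measure.map_prodMap_compProd_eq {Ω Y : Type*} [MeasurableSpace Ω]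
    [MeasurableSpace Y] {P : Measure Ω} [SFinite P]
    {η : Kernel Ω Y} [IsSFiniteKernel η] {f : Ω → Ω} {g : Y → Y}
    (hf : Measurable f) (hg : Measurable g) (hP : P.map f = P)
    (hη : ∀ ω, η (f ω) = (η ω).map g) :
    (P ⊗ₘ η).map (Prod.map f g) = P ⊗ₘ η := by
  ext A hA
  have hsection : Measurable fun ω => η ω (Prod.mk ω ⁻¹' A) :=
    Kernel.measurable_kernel_prodMk_left hA
  rw [Measure.map_apply (hf.prodMap hg) hA, Measure.compProd_apply (hA.preimage (hf.prodMap hg)),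
    Measure.compProd_apply hA]
  calc ∫⁻ ω, η ω (Prod.mk ω ⁻¹' (Prod.map f g ⁻¹' A)) ∂P
      = ∫⁻ ω, η (f ω) (Prod.mk (f ω) ⁻¹' A) ∂P := lintegral_congr fun ω => by
        rw [hη, Measure.map_apply hg (measurable_prodMk_left hA)]; rfl
    _ = ∫⁻ ω, η ω (Prod.mk ω ⁻¹' A) ∂P := by
        rw [← lintegral_map hsection hf, hP]

lemma lintegral_map_sub_const {E : Type*} [MeasurableSpace E] [AddGroup E] [MeasurableAdd E]
    (ν : Measure E) (f : E → ℝ≥0∞) (z : E) :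
    ∫⁻ x, f x ∂ν.map (· - z) = ∫⁻ x, f (x - z) ∂ν :=
  lintegral_map_equiv f (MeasurableEquiv.subRight z)

section Shift

variable {Ω E : Type*} [AddGroup E] {θ : E → Ω → Ω}

def diagShift (θ : E → Ω → Ω) (u : E) : Ω × E × E → Ω × E × E :=
  Prod.map (θ u) (Prod.map (· - u) (· - u))

/-- `transportMass θ h (ω, z, x)` is the mass sent from the point `x` to the point `z`. -/
def transportMass (θ : E → Ω → Ω) (h : Ω → E → ℝ≥0∞) (p : Ω × E × E) : ℝ≥0∞ :=
  h (θ p.2.2 p.1) (p.2.1 - p.2.2)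

lemma flow_apply_apply (hθ_add : ∀ x y, θ (x + y) = θ x ∘ θ y) (x y : E) (ω : Ω) :
    θ x (θ y ω) = θ (x + y) ω :=
  (congrFun (hθ_add x y) ω).symm

lemma transportMass_diagShift {h : Ω → E → ℝ≥0∞} (hθ_add : ∀ x y, θ (x + y) = θ x ∘ θ y)
    (u : E) (p : Ω × E × E) :
    transportMass θ h (diagShift θ u p) = transportMass θ h p := by
  simp only [transportMass, diagShift, Prod.map, flow_apply_apply hθ_add, sub_add_cancel,
    sub_sub_sub_cancel_right]

end Shift

section MassTransport

variable {Ω E : Type*} [MeasurableSpace Ω] [MeasurableSpace E] [AddGroup E] [MeasurableAdd₂ E]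
  [MeasurableNeg E]

lemma mass_transport (ρ : Measure E) [SFinite ρ] [ρ.IsAddLeftInvariant] [ρ.IsNegInvariant]
    {θ : E → Ω → Ω} (hθ : ∀ u, Measurable (θ u))
    (ν : Measure (Ω × E × E)) [SFinite ν] (hν : ∀ u, ν.map (diagShift θ u) = ν)
    {m : Ω × E × E → ℝ≥0∞} (hm : Measurable m) (hm_inv : ∀ u p, m (diagShift θ u p) = m p)
    {s t : Set E} (hs : MeasurableSet s) (ht : MeasurableSet t) :
    ρ t * ∫⁻ p, s.indicator 1 p.2.1 * m p ∂ν = ρ s * ∫⁻ p, t.indicator 1 p.2.2 * m p ∂ν := by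
  have h_add (x : E) : ∫⁻ u, t.indicator 1 (x + u) ∂ρ = ρ t := by
    rw [lintegral_add_left_eq_self (t.indicator 1) x, lintegral_indicator_one ht]
  have h_sub (z : E) : ∫⁻ u, s.indicator 1 (z - u) ∂ρ = ρ s := by
    rw [lintegral_sub_left_eq_self (s.indicator 1) z, lintegral_indicator_one hs]
  have hshift (u : E) : Measurable (diagShift θ u) :=
    (hθ u).prodMap ((measurable_sub_const u).prodMap (measurable_sub_const u))
  calc ρ t * ∫⁻ p, s.indicator 1 p.2.1 * m p ∂ν
      = ∫⁻ p, ∫⁻ u, t.indicator 1 (p.2.2 + u) * (s.indicator 1 p.2.1 * m p) ∂ρ ∂ν := by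
        rw [← lintegral_const_mul _ (by fun_prop)]
        refine lintegral_congr fun p => ?_
        rw [lintegral_mul_const _ (by fun_prop), h_add]
    _ = ∫⁻ u, ∫⁻ p, t.indicator 1 (p.2.2 + u) * (s.indicator 1 p.2.1 * m p) ∂ν ∂ρ :=
        lintegral_lintegral_swap (Measurable.aemeasurable (by fun_prop))
    _ = ∫⁻ u, ∫⁻ p, s.indicator 1 (p.2.1 - u) * (t.indicator 1 p.2.2 * m p) ∂ν ∂ρ := by
        refine lintegral_congr fun u => ?_
        conv_lhs => rw [← hν u]
        rw [lintegral_map (by fun_prop) (hshift u)]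
        refine lintegral_congr fun p => ?_
        rw [hm_inv, mul_left_comm]
        simp only [diagShift, Prod.map_snd, Prod.map_fst, sub_add_cancel]
    _ = ∫⁻ p, ∫⁻ u, s.indicator 1 (p.2.1 - u) * (t.indicator 1 p.2.2 * m p) ∂ρ ∂ν :=
        lintegral_lintegral_swap (Measurable.aemeasurable (by fun_prop))
    _ = ρ s * ∫⁻ p, t.indicator 1 p.2.2 * m p ∂ν := by
        rw [← lintegral_const_mul _ (by fun_prop)]
        refine lintegral_congr fun p => ?_
        rw [lintegral_mul_const _ (by fun_prop), h_sub]

end MassTransport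

section RandomMeasures

variable {Ω E : Type*} [MeasurableSpace Ω] [MeasurableSpace E] {P : Measure Ω} [SFinite P]
  {θ : E → Ω → Ω} {B : Set E}

lemma mul_lintegral_palm (hθ : Measurable fun q : Ω × E => θ q.2 q.1) (κ : Kernel Ω E)
    [IsSFiniteKernel κ] (hB : MeasurableSet B) {γ : ℝ≥0∞} (hγ₀ : γ ≠ 0)
    (hγ : γ ≠ ∞) {Palm : Measure Ω}
    (hPalm : ∀ A : Set Ω, MeasurableSet A →
      Palm A = γ⁻¹ * ∫⁻ ω, ∫⁻ x in B, A.indicator (fun _ => 1) (θ x ω) ∂(κ ω) ∂P)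
    {f : Ω → ℝ≥0∞} (hf : Measurable f) :
    γ * ∫⁻ ω, f ω ∂Palm = ∫⁻ ω, ∫⁻ x in B, f (θ x ω) ∂κ ω ∂P := by
  have hPalm_eq : Palm = γ⁻¹ • (P ⊗ₘ κ.restrict hB).map fun q => θ q.2 q.1 := by
    ext A hA
    rw [hPalm A hA, Measure.smul_apply, smul_eq_mul, Measure.map_apply hθ hA,
      Measure.compProd_apply (hθ hA)]
    congr 1
    refine lintegral_congr fun ω => ?_
    have hsection : MeasurableSet ((fun x => θ x ω) ⁻¹' A) :=
      hA.preimage (hθ.comp measurable_prodMk_left)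
    rw [Kernel.restrict_apply]
    exact lintegral_indicator_one hsection
  rw [hPalm_eq, lintegral_smul_measure, smul_eq_mul, ← mul_assoc, ENNReal.mul_inv_cancel hγ₀ hγ,
    one_mul, lintegral_map hf hθ,
    Measure.lintegral_compProd (f := fun q => f (θ q.2 q.1)) (hf.comp hθ)]
  simp only [Kernel.restrict_apply]

variable {κ κ' : Kernel Ω E} [IsSFiniteKernel κ] [IsSFiniteKernel κ'] {m : Ω × E × E → ℝ≥0∞}
  {s : Set E}

lemma lintegral_compProd_prod_indicator_fst_mul (hm : Measurable m) (hs : MeasurableSet s) :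
    ∫⁻ p, s.indicator 1 p.2.1 * m p ∂(P ⊗ₘ (κ ×ₖ κ'))
      = ∫⁻ ω, ∫⁻ z in s, ∫⁻ x, m (ω, z, x) ∂κ' ω ∂κ ω ∂P := by
  rw [Measure.lintegral_compProd (by fun_prop)]
  refine lintegral_congr fun ω => ?_
  rw [Kernel.lintegral_prod _ _ _ (by fun_prop), ← lintegral_indicator hs]
  refine lintegral_congr fun z => ?_
  by_cases hz : z ∈ s <;> simp [hz]

lemma lintegral_compProd_prod_indicator_snd_mul (hm : Measurable m) (hs : MeasurableSet s) :
    ∫⁻ p, s.indicator 1 p.2.2 * m p ∂(P ⊗ₘ (κ ×ₖ κ'))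
      = ∫⁻ ω, ∫⁻ x in s, ∫⁻ z, m (ω, z, x) ∂κ ω ∂κ' ω ∂P := by
  rw [Measure.lintegral_compProd (by fun_prop)]
  refine lintegral_congr fun ω => ?_
  rw [Kernel.lintegral_prod_symm _ _ _ (by fun_prop), ← lintegral_indicator hs]
  refine lintegral_congr fun x => ?_
  by_cases hx : x ∈ s <;> simp [hx]

variable [AddGroup E] [MeasurableAdd₂ E] [MeasurableNeg E] {h : Ω → E → ℝ≥0∞}

lemma map_diagShift_compProd_prod (hθ : ∀ u, Measurable (θ u)) (hP : ∀ u, P.map (θ u) = P)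
    (hκ : ∀ u ω, κ (θ u ω) = (κ ω).map (· - u)) (hκ' : ∀ u ω, κ' (θ u ω) = (κ' ω).map (· - u))
    (u : E) : (P ⊗ₘ (κ ×ₖ κ')).map (diagShift θ u) = P ⊗ₘ (κ ×ₖ κ') :=
  Measure.map_prodMap_compProd_eq (hθ u)
    ((measurable_sub_const u).prodMap (measurable_sub_const u)) (hP u) fun ω => by
      rw [Kernel.prod_apply, Kernel.prod_apply, hκ, hκ',
        Measure.map_prod_map _ _ (measurable_sub_const u) (measurable_sub_const u)]

lemma measurable_transportMass (hθ : Measurable fun q : Ω × E => θ q.2 q.1)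
    (hh : Measurable (Function.uncurry h)) : Measurable (transportMass θ h) :=
  hh.comp ((hθ.comp (measurable_fst.prodMk measurable_snd.snd)).prodMk
    (measurable_snd.fst.sub measurable_snd.snd))

lemma mul_lintegral_palm_lintegral_neg (hθ : Measurable fun q : Ω × E => θ q.2 q.1)
    (hθ_add : ∀ x y, θ (x + y) = θ x ∘ θ y) (hκ' : ∀ x ω, κ' (θ x ω) = (κ' ω).map (· - x))
    (hB : MeasurableSet B) {γ : ℝ≥0∞} (hγ₀ : γ ≠ 0) (hγ : γ ≠ ∞) {Palm : Measure Ω}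
    (hPalm : ∀ A : Set Ω, MeasurableSet A →
      Palm A = γ⁻¹ * ∫⁻ ω, ∫⁻ x in B, A.indicator (fun _ => 1) (θ x ω) ∂(κ ω) ∂P)
    (hh : Measurable (Function.uncurry h)) :
    γ * ∫⁻ ω, ∫⁻ x, h (θ x ω) (-x) ∂κ' ω ∂Palm
      = ∫⁻ p, B.indicator 1 p.2.1 * transportMass θ h p ∂(P ⊗ₘ (κ ×ₖ κ')) := by
  have hF : Measurable fun ω => ∫⁻ x, h (θ x ω) (-x) ∂κ' ω :=
    Measurable.lintegral_kernel_prod_right' (f := fun p => h (θ p.2 p.1) (-p.2))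
      (hh.comp (hθ.prodMk measurable_snd.neg))
  rw [mul_lintegral_palm hθ κ hB hγ₀ hγ hPalm hF,
    lintegral_compProd_prod_indicator_fst_mul (measurable_transportMass hθ hh) hB]
  refine lintegral_congr fun ω => setLIntegral_congr_fun hB fun z _ => ?_
  simp only [hκ', lintegral_map_sub_const, transportMass, flow_apply_apply hθ_add, sub_add_cancel,
    neg_sub]

lemma mul_lintegral_palm_lintegral (hθ : Measurable fun q : Ω × E => θ q.2 q.1)
    (hκ : ∀ x ω, κ (θ x ω) = (κ ω).map (· - x))
    (hB : MeasurableSet B) {γ : ℝ≥0∞} (hγ₀ : γ ≠ 0) (hγ : γ ≠ ∞) {Palm : Measure Ω}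
    (hPalm : ∀ A : Set Ω, MeasurableSet A →
      Palm A = γ⁻¹ * ∫⁻ ω, ∫⁻ x in B, A.indicator (fun _ => 1) (θ x ω) ∂(κ' ω) ∂P)
    (hh : Measurable (Function.uncurry h)) :
    γ * ∫⁻ ω, ∫⁻ z, h ω z ∂κ ω ∂Palm
      = ∫⁻ p, B.indicator 1 p.2.2 * transportMass θ h p ∂(P ⊗ₘ (κ ×ₖ κ')) := by
  have hG : Measurable fun ω => ∫⁻ z, h ω z ∂κ ω := Measurable.lintegral_kernel_prod_right' hh
  rw [mul_lintegral_palm hθ κ' hB hγ₀ hγ hPalm hG,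
    lintegral_compProd_prod_indicator_snd_mul (measurable_transportMass hθ hh) hB]
  refine lintegral_congr fun ω => setLIntegral_congr_fun hB fun x _ => ?_
  simp only [hκ, lintegral_map_sub_const, transportMass]

end RandomMeasures

lemma unitCube_eq_preimage_ofLp (d : ℕ) :
    unitCube d = WithLp.ofLp ⁻¹' univ.pi fun _ => Icc (0 : ℝ) 1 := by
  ext x
  simp [unitCube, Pi.le_def, forall_and]

lemma measurableSet_unitCube (d : ℕ) : MeasurableSet (unitCube d) := by
  rw [unitCube_eq_preimage_ofLp]
  exact (MeasurableSet.univ_pi fun _ => measurableSet_Icc).preimage (by fun_prop)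

lemma volume_unitCube (d : ℕ) : volume (unitCube d) = 1 := by
  rw [unitCube_eq_preimage_ofLp, (PiLp.volume_preserving_ofLp (Fin d)).measure_preimage
    (MeasurableSet.univ_pi fun _ => measurableSet_Icc).nullMeasurableSet, volume_pi_pi]
  simp

theorem neveu_exchange_formula_general
    {d : ℕ} {Ω : Type} [MeasurableSpace Ω]
    (P : Measure Ω) [IsProbabilityMeasure P]
    (θ : Euc d → Ω → Ω)
    (hθ_meas : Measurable fun q : Ω × Euc d => θ q.2 q.1)
    (hθ_add : ∀ x y : Euc d, θ (x + y) = θ x ∘ θ y)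
    (hθ_inv : ∀ x, P.map (θ x) = P)
    (μ μ' : Ω → Measure (Euc d))
    (hμ_meas : Measurable μ) (hμ'_meas : Measurable μ')
    (hμ_locfin : ∀ ω, IsFiniteMeasureOnCompacts (μ ω))
    (hμ'_locfin : ∀ ω, IsFiniteMeasureOnCompacts (μ' ω))
    (hμ_inv : ∀ x ω, μ (θ x ω) = (μ ω).map fun y => y - x)
    (hμ'_inv : ∀ x ω, μ' (θ x ω) = (μ' ω).map fun y => y - x)
    (γ γ' : ℝ≥0∞)
    (hγ_pos : 0 < γ) (hγ_fin : γ ≠ ∞) (hγ'_pos : 0 < γ') (hγ'_fin : γ' ≠ ∞)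
    (Palm Palm' : Measure Ω)
    (hPalm : ∀ A : Set Ω, MeasurableSet A →
      Palm A = γ⁻¹ * ∫⁻ ω, ∫⁻ x in unitCube d, A.indicator (fun _ => 1) (θ x ω) ∂(μ ω) ∂P)
    (hPalm' : ∀ A : Set Ω, MeasurableSet A →
      Palm' A = γ'⁻¹ * ∫⁻ ω, ∫⁻ x in unitCube d, A.indicator (fun _ => 1) (θ x ω) ∂(μ' ω) ∂P)
    (h : Ω → Euc d → ℝ≥0∞) (hh : Measurable (Function.uncurry h)) :
    γ * ∫⁻ ω, ∫⁻ x, h (θ x ω) (-x) ∂(μ' ω) ∂Palm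
      = γ' * ∫⁻ ω, ∫⁻ x, h ω x ∂(μ ω) ∂Palm' := by
  let κ : Kernel Ω (Euc d) := ⟨μ, hμ_meas⟩
  let κ' : Kernel Ω (Euc d) := ⟨μ', hμ'_meas⟩
  have := Kernel.isSFiniteKernel_of_isFiniteMeasureOnCompacts κ hμ_locfin
  have := Kernel.isSFiniteKernel_of_isFiniteMeasureOnCompacts κ' hμ'_locfin
  have hθ_at (u : Euc d) : Measurable (θ u) := hθ_meas.comp (measurable_id.prodMk measurable_const)
  have hC := measurableSet_unitCube d
  calc γ * ∫⁻ ω, ∫⁻ x, h (θ x ω) (-x) ∂(μ' ω) ∂Palm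
      = ∫⁻ p, (unitCube d).indicator 1 p.2.1 * transportMass θ h p ∂(P ⊗ₘ (κ ×ₖ κ')) :=
        mul_lintegral_palm_lintegral_neg (κ := κ) (κ' := κ') hθ_meas hθ_add hμ'_inv hC
          hγ_pos.ne' hγ_fin hPalm hh
    _ = ∫⁻ p, (unitCube d).indicator 1 p.2.2 * transportMass θ h p ∂(P ⊗ₘ (κ ×ₖ κ')) := by
        simpa only [volume_unitCube, one_mul] using mass_transport volume hθ_at _
          (map_diagShift_compProd_prod hθ_at hθ_inv hμ_inv hμ'_inv)
          (measurable_transportMass hθ_meas hh) (transportMass_diagShift hθ_add) hC hC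
    _ = γ' * ∫⁻ ω, ∫⁻ x, h ω x ∂(μ ω) ∂Palm' :=
        (mul_lintegral_palm_lintegral (κ := κ) (κ' := κ') hθ_meas hμ_inv hC hγ'_pos.ne' hγ'_fin
          hPalm' hh).symm

/-- **Neveu's exchange formula** (mass-transport principle). For invariant random
measures `μ, μ'` on `ℝ^d` with positive finite intensities and every measurable
`h : Ω × ℝ^d → [0,∞]`,
`γ_μ 𝔼^0_μ ∫ h(θ_x ω, -x) μ'(dx) = γ_{μ'} 𝔼^0_{μ'} ∫ h(ω, x) μ(dx)`. -/
theorem neveu_exchange_formula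
    {d : ℕ} {Ω : Type} [MeasurableSpace Ω]
    (P : Measure Ω) [IsProbabilityMeasure P]
    (θ : Euc d → Ω → Ω)
    (hθ_meas : Measurable fun q : Ω × Euc d => θ q.2 q.1)
    (hθ_add : ∀ x y : Euc d, θ (x + y) = θ x ∘ θ y)
    (hθ_zero : θ 0 = id)
    (hθ_inv : ∀ x, P.map (θ x) = P)
    (μ μ' : Ω → Measure (Euc d))
    (hμ_meas : Measurable μ) (hμ'_meas : Measurable μ')
    (hμ_locfin : ∀ ω, IsFiniteMeasureOnCompacts (μ ω))
    (hμ'_locfin : ∀ ω, IsFiniteMeasureOnCompacts (μ' ω))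
    (hμ_inv : ∀ x ω, μ (θ x ω) = (μ ω).map fun y => y - x)
    (hμ'_inv : ∀ x ω, μ' (θ x ω) = (μ' ω).map fun y => y - x)
    (γ γ' : ℝ≥0∞)
    (hγ : γ = ∫⁻ ω, μ ω (unitCube d) ∂P) (hγ' : γ' = ∫⁻ ω, μ' ω (unitCube d) ∂P)
    (hγ_pos : 0 < γ) (hγ_fin : γ ≠ ∞) (hγ'_pos : 0 < γ') (hγ'_fin : γ' ≠ ∞)
    (Palm Palm' : Measure Ω)
    (hPalm : ∀ A : Set Ω, MeasurableSet A →
      Palm A = γ⁻¹ * ∫⁻ ω, ∫⁻ x in unitCube d, A.indicator (fun _ => 1) (θ x ω) ∂(μ ω) ∂P)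
    (hPalm' : ∀ A : Set Ω, MeasurableSet A →
      Palm' A = γ'⁻¹ * ∫⁻ ω, ∫⁻ x in unitCube d, A.indicator (fun _ => 1) (θ x ω) ∂(μ' ω) ∂P)
    (h : Ω → Euc d → ℝ≥0∞) (hh : Measurable (Function.uncurry h)) :
    γ * ∫⁻ ω, ∫⁻ x, h (θ x ω) (-x) ∂(μ' ω) ∂Palm
      = γ' * ∫⁻ ω, ∫⁻ x, h ω x ∂(μ ω) ∂Palm' :=
  neveu_exchange_formula_general P θ hθ_meas hθ_add hθ_inv μ μ' hμ_meas hμ'_meas hμ_locfin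
    hμ'_locfin hμ_inv hμ'_inv γ γ' hγ_pos hγ_fin hγ'_pos hγ'_fin Palm Palm' hPalm hPalm' h hh
end
end

section
/- Exponential tail and moments of the second-order neighbourhood in a Poisson–Voronoi tessellation: Let η be a stationary Poisson process on ℝ^d with intensity γ > 0 and set η⁰ := η ∪ {0}. Then there exists a constant l depending only on d such that for all integers n ≥ 2, ℙ( |N_2(η⁰, 0)| ≥ n ) ≤ l · (1 − 16^{−d})^{n−1}. Consequently, 𝔼[ |N_2(η⁰, 0)|^m ] < ∞ for every m ∈ ℕ. -/
open MeasureTheory Set Filter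
open scoped ENNReal Pointwise Topology

noncomputable section

/-- The Voronoi cell of `x` with respect to a set `μ` of points. -/
def voronoiCell {d : ℕ} (μ : Set (Euc d)) (x : Euc d) : Set (Euc d) :=
  {y | ∀ z ∈ μ, dist y x ≤ dist y z}

/-- The Voronoi neighbours `N(μ, x)` of `x`. -/
def vNeighbours {d : ℕ} (μ : Set (Euc d)) (x : Euc d) : Set (Euc d) :=
  {y | y ∈ μ ∧ y ≠ x ∧ (voronoiCell μ x ∩ voronoiCell μ y).Nonempty}

/-- The second-order Voronoi neighbourhood `N₂(μ, x)` of `x`. -/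
def vNeighbours2 {d : ℕ} (μ : Set (Euc d)) (x : Euc d) : Set (Euc d) :=
  {y | y ∈ μ ∧ ∃ z ∈ vNeighbours μ x, y ∈ vNeighbours μ z}

/-- `η` is a stationary Poisson process on `ℝ^d` with intensity `γ` under `P`:
it is locally finite, counts in sets of finite volume are Poisson distributed with the
corresponding mean, and counts in pairwise disjoint sets are independent. -/
def IsPoissonProcess {d : ℕ} {Ω : Type} [MeasurableSpace Ω] (P : Measure Ω)
    (η : Ω → Set (Euc d)) (γ : ℝ) : Prop :=
  (∀ ω, ∀ K : Set (Euc d), IsCompact K → (η ω ∩ K).Finite) ∧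
  (∀ B : Set (Euc d), MeasurableSet B → volume B ≠ ∞ →
    (Measurable fun ω => (η ω ∩ B).ncard) ∧
    ∀ n : ℕ, P {ω | (η ω ∩ B).ncard = n} =
      ENNReal.ofReal (Real.exp (-(γ * (volume B).toReal)) *
        (γ * (volume B).toReal) ^ n / n.factorial)) ∧
  (∀ (m : ℕ) (B : Fin m → Set (Euc d)), (∀ i, MeasurableSet (B i)) →
    (∀ i, volume (B i) ≠ ∞) → Pairwise (Function.onFun Disjoint B) →
    ProbabilityTheory.iIndepFun (fun i ω => (η ω ∩ B i).ncard) P)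


/-!
Fix a finite `1/5`-net `s` of the ball of radius `3`. If, for some `r > 0`, each of the balls
`B(r • t, 4r/5)`, `t ∈ s`, contains a point of `η`, then every ball of radius `r` centred within
`3r` of the origin meets `η`. Hence a point of a Voronoi cell whose nucleus lies within `2r` of the
origin is closer than `r` to that nucleus (otherwise a point-free ball of radius `r` would fit
inside the empty ball around it), so Voronoi neighbours are closer than `2r` and
`N₂(η⁰, 0) ⊆ B(0, 4r)`. Choosing `r` with `γ |B(0, 4r)| = n/2`, the event `|N₂(η⁰, 0)| ≥ n`
requires either an empty net ball, of probability `exp(-5⁻ᵈ n/2)` each, or at least `n - 1`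
points in `B(0, 4r)`, a Poisson tail of order `(e^{1/2}/2)ⁿ`. Both are `O((1 - 16⁻ᵈ)ⁿ)`, and
summing such tails bounds every moment.
-/

open Metric Real

section Geometry

variable {E : Type*} [NormedAddCommGroup E] [NormedSpace ℝ E]

theorem exists_dist_eq_ball_subset_ball {w p : E} {r : ℝ} (hr : 0 ≤ r) (hrw : r ≤ dist w p) :
    ∃ c, dist c p = r ∧ ball c r ⊆ ball w (dist w p) := by
  obtain hwp | hwp := (hr.trans hrw).eq_or_lt
  · exact ⟨p, by linarith [dist_self p], by simp [show r = 0 by linarith]⟩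
  refine ⟨AffineMap.lineMap p w (r / dist w p), ?_, ball_subset_ball' ?_⟩
  · rw [dist_lineMap_left, dist_comm p w, Real.norm_eq_abs, abs_of_nonneg (by positivity)]
    field_simp
  · rw [dist_lineMap_right, dist_comm p w, Real.norm_eq_abs,
      abs_of_nonneg (by rw [sub_nonneg, div_le_one hwp]; exact hrw)]
    field_simp
    linarith

theorem inter_ball_nonempty_of_net {μ : Set E} {s : Finset E}
    (hs : closedBall 0 3 ⊆ ⋃ t ∈ s, ball t (1 / 5)) {r : ℝ} (hr : 0 < r)
    (hμ : ∀ t ∈ s, (μ ∩ ball (r • t) (4 / 5 * r)).Nonempty) {c : E} (hc : ‖c‖ ≤ 3 * r) :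
    (μ ∩ ball c r).Nonempty := by
  have hc' : r⁻¹ • c ∈ closedBall (0 : E) 3 := by
    rw [mem_closedBall_zero_iff, norm_smul, norm_inv, Real.norm_of_nonneg hr.le,
      inv_mul_le_iff₀ hr]
    linarith
  obtain ⟨t, ht, hct⟩ : ∃ t ∈ s, dist (r⁻¹ • c) t < 1 / 5 := by simpa using hs hc'
  have hdist : dist (r • t) c < r / 5 := by
    calc dist (r • t) c = dist (r • t) (r • r⁻¹ • c) := by rw [smul_inv_smul₀ hr.ne']
      _ = r * dist t (r⁻¹ • c) := by
          rw [dist_smul₀, Real.norm_of_nonneg hr.le]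
      _ < r * (1 / 5) := by rw [dist_comm]; gcongr
      _ = r / 5 := by ring
  exact (hμ t ht).mono (inter_subset_inter_right _ (ball_subset_ball' (by linarith)))

end Geometry

section Voronoi

variable {d : ℕ} {μ : Set (Euc d)} {R r : ℝ}

theorem dist_lt_of_mem_voronoiCell (hr : 0 ≤ r)
    (hμ : ∀ c, ‖c‖ ≤ R + r → (μ ∩ ball c r).Nonempty) {x w : Euc d} (hx : ‖x‖ ≤ R)
    (hw : w ∈ voronoiCell μ x) : dist w x < r := by
  by_contra! hrw
  obtain ⟨c, hcx, hball⟩ := exists_dist_eq_ball_subset_ball hr hrw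
  obtain ⟨u, huμ, hu⟩ := hμ c (by linarith [norm_le_norm_add_const_of_dist_le hcx.le])
  have := hball hu
  rw [mem_ball, dist_comm] at this
  exact (hw u huμ).not_gt this

theorem dist_lt_of_mem_vNeighbours (hr : 0 ≤ r)
    (hμ : ∀ c, ‖c‖ ≤ R + r → (μ ∩ ball c r).Nonempty) {x z : Euc d} (hxμ : x ∈ μ)
    (hx : ‖x‖ ≤ R) (hz : z ∈ vNeighbours μ x) : dist z x < 2 * r := by
  obtain ⟨-, -, w, hwx, hwz⟩ := hz
  have hw := dist_lt_of_mem_voronoiCell hr hμ hx hwx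
  linarith [dist_triangle_left z x w, hwz x hxμ]

theorem vNeighbours2_subset_ball (hr : 0 ≤ r) (h0 : (0 : Euc d) ∈ μ)
    (hμ : ∀ c, ‖c‖ ≤ 3 * r → (μ ∩ ball c r).Nonempty) :
    vNeighbours2 μ 0 ⊆ ball 0 (4 * r) := by
  rintro y ⟨-, z, hz, hyz⟩
  have hμ' : ∀ c, ‖c‖ ≤ 2 * r + r → (μ ∩ ball c r).Nonempty := fun c hc => hμ c (by linarith)
  have hz0 : ‖z‖ < 2 * r := by
    simpa using dist_lt_of_mem_vNeighbours hr hμ' h0 (by simpa using hr) hz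
  have hyz := dist_lt_of_mem_vNeighbours hr hμ' hz.1 hz0.le hyz
  rw [mem_ball_zero_iff]
  linarith [norm_le_norm_add_const_of_dist_le (le_refl (dist y z))]

theorem ncard_vNeighbours2_insert_zero_le {s : Finset (Euc d)}
    (hs : closedBall 0 3 ⊆ ⋃ t ∈ s, ball t (1 / 5)) (hr : 0 < r)
    (hfin : (μ ∩ ball 0 (4 * r)).Finite) (hμ : ∀ t ∈ s, (μ ∩ ball (r • t) (4 / 5 * r)).Nonempty) :
    (vNeighbours2 (insert 0 μ) 0).ncard ≤ (μ ∩ ball 0 (4 * r)).ncard + 1 := by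
  have hμ₀ : ∀ t ∈ s, (insert 0 μ ∩ ball (r • t) (4 / 5 * r)).Nonempty := fun t ht =>
    (hμ t ht).mono (inter_subset_inter_left _ (subset_insert _ _))
  have hsub : vNeighbours2 (insert 0 μ) 0 ⊆ insert 0 (μ ∩ ball 0 (4 * r)) := by
    rw [← insert_inter_of_mem (mem_ball_self (by positivity))]
    exact subset_inter (fun y hy => hy.1) (vNeighbours2_subset_ball hr.le (mem_insert _ _)
      fun c hc => inter_ball_nonempty_of_net hs hr hμ₀ hc)
  exact (ncard_le_ncard hsub (hfin.insert 0)).trans (ncard_insert_le _ _)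

end Voronoi

section Probability

variable {Ω : Type*} [MeasurableSpace Ω] {P : Measure Ω}

theorem poisson_tail_le {X : Ω → ℕ} {m : ℝ} (hm : 0 ≤ m)
    (hX : ∀ k : ℕ, P {ω | X ω = k} = ENNReal.ofReal (exp (-m) * m ^ k / k.factorial))
    (N : ℕ) : P {ω | N ≤ X ω} ≤ ENNReal.ofReal (2 * exp m / 2 ^ N) := by
  -- `m ^ k / k! ≤ exp (2 * m) / 2 ^ k`, so the tail is dominated by a geometric series
  have hterm : ∀ j : ℕ, exp (-m) * m ^ (N + j) / (N + j).factorial ≤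
      exp m / 2 ^ N * (1 / 2) ^ j := fun j => by
    calc exp (-m) * m ^ (N + j) / (N + j).factorial
        = exp (-m) * ((2 * m) ^ (N + j) / (N + j).factorial) / 2 ^ (N + j) := by
          rw [mul_pow]; field_simp
      _ ≤ exp (-m) * exp (2 * m) / 2 ^ (N + j) := by
          gcongr; exact pow_div_factorial_le_exp (2 * m) (by positivity) _
      _ = exp m / 2 ^ N * (1 / 2) ^ j := by
          rw [← exp_add, pow_add, one_div_pow]; ring_nf
  calc P {ω | N ≤ X ω} ≤ P (⋃ j : ℕ, {ω | X ω = N + j}) :=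
        measure_mono fun ω hω => mem_iUnion.2 ⟨X ω - N, by simp only [mem_ofPred_eq] at *; omega⟩
    _ ≤ ∑' j : ℕ, P {ω | X ω = N + j} := measure_iUnion_le _
    _ ≤ ∑' j : ℕ, ENNReal.ofReal (exp m / 2 ^ N * (1 / 2) ^ j) :=
        ENNReal.tsum_le_tsum fun j => (hX _).trans_le (ENNReal.ofReal_le_ofReal (hterm j))
    _ = ENNReal.ofReal (2 * exp m / 2 ^ N) := by
        have hnonneg : ∀ j : ℕ, 0 ≤ exp m / 2 ^ N * (1 / 2 : ℝ) ^ j := fun j => by positivity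
        rw [← ENNReal.ofReal_tsum_of_nonneg hnonneg (summable_geometric_two.mul_left _),
          tsum_mul_left, tsum_geometric_two]
        ring_nf

theorem lintegral_pow_ne_top_of_tail_le {X : Ω → ℕ} {C q : ℝ} (hq0 : 0 ≤ q) (hq1 : q < 1)
    (htail : ∀ n : ℕ, P {ω | n ≤ X ω} ≤ ENNReal.ofReal (C * q ^ n)) (m : ℕ) :
    ∫⁻ ω, (X ω : ℝ≥0∞) ^ m ∂P ≠ ∞ := by
  set A : ℕ → Set Ω := fun k => toMeasurable P {ω | k ≤ X ω}
  have hA : ∀ k, MeasurableSet (A k) := fun k => measurableSet_toMeasurable _ _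
  have hpt : ∀ ω, (X ω : ℝ≥0∞) ^ m ≤ ∑' k : ℕ, (A k).indicator (fun _ => (k : ℝ≥0∞) ^ m) ω :=
    fun ω => by
      calc (X ω : ℝ≥0∞) ^ m = (A (X ω)).indicator (fun _ => (X ω : ℝ≥0∞) ^ m) ω :=
            by rw [indicator_of_mem (show ω ∈ A (X ω) from subset_toMeasurable _ _ (le_refl (X ω)))]
        _ ≤ _ := ENNReal.le_tsum (X ω)
  have hsum : Summable fun k : ℕ => C * ((k : ℝ) ^ m * q ^ k) :=
    (summable_pow_mul_geometric_of_norm_lt_one m (by rw [norm_of_nonneg hq0]; exact hq1)).mul_left C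
  refine ne_top_of_le_ne_top hsum.tsum_ofReal_ne_top ?_
  calc ∫⁻ ω, (X ω : ℝ≥0∞) ^ m ∂P
      ≤ ∫⁻ ω, ∑' k : ℕ, (A k).indicator (fun _ => (k : ℝ≥0∞) ^ m) ω ∂P := lintegral_mono hpt
    _ = ∑' k : ℕ, (k : ℝ≥0∞) ^ m * P {ω | k ≤ X ω} := by
        rw [lintegral_tsum fun k => (aemeasurable_const.indicator (hA k))]
        simp_rw [lintegral_indicator_const (hA _), A, measure_toMeasurable]
    _ ≤ ∑' k : ℕ, ENNReal.ofReal (C * ((k : ℝ) ^ m * q ^ k)) := by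
        refine ENNReal.tsum_le_tsum fun k => ?_
        calc (k : ℝ≥0∞) ^ m * P {ω | k ≤ X ω}
            ≤ ENNReal.ofReal ((k : ℝ) ^ m) * ENNReal.ofReal (C * q ^ k) := by
              rw [ENNReal.ofReal_pow (Nat.cast_nonneg k), ENNReal.ofReal_natCast]
              gcongr
              exact htail k
          _ = ENNReal.ofReal (C * ((k : ℝ) ^ m * q ^ k)) := by
              rw [← ENNReal.ofReal_mul (by positivity)]; ring_nf

end Probability

theorem exists_pos_toReal_measure_ball_eq {E : Type*} [NormedAddCommGroup E] [NormedSpace ℝ E]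
    [MeasurableSpace E] [BorelSpace E] [FiniteDimensional ℝ E] (μ : Measure E)
    [μ.IsAddHaarMeasure] (hE : Module.finrank ℝ E ≠ 0) (x : E) {a : ℝ} (ha : 0 < a) :
    ∃ r > 0, (μ (ball x r)).toReal = a := by
  have hv : 0 < (μ (ball (0 : E) 1)).toReal :=
    ENNReal.toReal_pos (measure_ball_pos μ 0 one_pos).ne' measure_ball_lt_top.ne
  refine ⟨(a / (μ (ball (0 : E) 1)).toReal) ^ ((Module.finrank ℝ E)⁻¹ : ℝ), by positivity, ?_⟩
  rw [Measure.addHaar_ball_of_pos μ x (by positivity), ENNReal.toReal_mul,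
    ENNReal.toReal_ofReal (by positivity), rpow_inv_natCast_pow (by positivity) hE]
  field_simp

theorem exp_neg_le_one_sub_sixteen_zpow {d : ℕ} (hd : 1 ≤ d) :
    exp (-((1 / 5) ^ d / 2)) ≤ 1 - (16 : ℝ) ^ (-(d : ℤ)) := by
  set a : ℝ := (1 / 5) ^ d / 2 with ha_def
  have ha : a ≤ 1 / 10 := by
    have : ((1 : ℝ) / 5) ^ d ≤ 1 / 5 := pow_le_of_le_one (by norm_num) (by norm_num) (by omega)
    linarith
  have h516 : ((5 : ℝ) / 16) ^ d ≤ 5 / 16 := pow_le_of_le_one (by norm_num) (by norm_num) (by omega)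
  have hs : (16 : ℝ) ^ (-(d : ℤ)) = 2 * (5 / 16) ^ d * a := by
    rw [zpow_neg, zpow_natCast, ← inv_pow, ha_def, show (16 : ℝ)⁻¹ = 5 / 16 * (1 / 5) by norm_num,
      mul_pow]
    ring
  calc exp (-a) = (exp a)⁻¹ := exp_neg a
    _ ≤ (1 + a)⁻¹ := inv_anti₀ (by positivity) (by linarith [add_one_le_exp a])
    _ ≤ 1 - (16 : ℝ) ^ (-(d : ℤ)) := by
        rw [inv_le_iff_one_le_mul₀ (by positivity), hs]
        have : 0 ≤ a := by positivity
        nlinarith [mul_nonneg this (pow_nonneg (by norm_num : (0 : ℝ) ≤ 5 / 16) d)]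

theorem exp_half_div_two_le_one_sub_sixteen_zpow {d : ℕ} (hd : 1 ≤ d) :
    exp (1 / 2) / 2 ≤ 1 - (16 : ℝ) ^ (-(d : ℤ)) := by
  have h16 : (16 : ℝ) ^ (-(d : ℤ)) ≤ 1 / 16 := by
    rw [zpow_neg, zpow_natCast, ← inv_pow, ← one_div]
    exact pow_le_of_le_one (by norm_num) (by norm_num) (by omega)
  have hsq : exp (1 / 2) * exp (1 / 2) = exp 1 := by rw [← exp_add]; norm_num
  nlinarith [exp_one_lt_d9, exp_pos (1 / 2)]

namespace IsPoissonProcess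

variable {d : ℕ} {Ω : Type} [MeasurableSpace Ω] {P : Measure Ω} {η : Ω → Set (Euc d)} {γ : ℝ}
  {s : Finset (Euc d)}

theorem measure_le_ncard_vNeighbours2_le_of_radius (hη : IsPoissonProcess P η γ) (hγ : 0 ≤ γ)
    (hs : closedBall 0 3 ⊆ ⋃ t ∈ s, ball t (1 / 5)) {r : ℝ} (hr : 0 < r) (N : ℕ) :
    P {ω | N + 1 ≤ (vNeighbours2 (insert 0 (η ω)) 0).ncard} ≤
      ∑ t ∈ s, ENNReal.ofReal (exp (-(γ * (volume (ball (r • t) (4 / 5 * r))).toReal))) +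
        ENNReal.ofReal (2 * exp (γ * (volume (ball (0 : Euc d) (4 * r))).toReal) / 2 ^ N) := by
  obtain ⟨hloc, hcount, -⟩ := hη
  have hevent : {ω | N + 1 ≤ (vNeighbours2 (insert 0 (η ω)) 0).ncard} ⊆
      (⋃ t ∈ s, {ω | (η ω ∩ ball (r • t) (4 / 5 * r)).ncard = 0}) ∪
        {ω | N ≤ (η ω ∩ ball 0 (4 * r)).ncard} := by
    intro ω hω
    by_cases hμ : ∀ t ∈ s, (η ω ∩ ball (r • t) (4 / 5 * r)).Nonempty
    · have hfin : (η ω ∩ ball 0 (4 * r)).Finite :=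
        (hloc ω _ (isCompact_closedBall 0 (4 * r))).subset
          (inter_subset_inter_right _ ball_subset_closedBall)
      have := ncard_vNeighbours2_insert_zero_le hs hr hfin hμ
      right
      simp only [mem_ofPred_eq] at hω ⊢
      omega
    · push Not at hμ
      obtain ⟨t, ht, he⟩ := hμ
      exact Or.inl (mem_biUnion ht (by simp [he]))
  calc P {ω | N + 1 ≤ (vNeighbours2 (insert 0 (η ω)) 0).ncard}
      ≤ ∑ t ∈ s, P {ω | (η ω ∩ ball (r • t) (4 / 5 * r)).ncard = 0} +
          P {ω | N ≤ (η ω ∩ ball 0 (4 * r)).ncard} :=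
        (measure_mono hevent).trans ((measure_union_le _ _).trans
          (add_le_add_left (measure_biUnion_finset_le _ _) _))
    _ ≤ _ := by
        gcongr with t ht
        · simpa using ((hcount _ measurableSet_ball measure_ball_lt_top.ne).2 0).le
        · exact poisson_tail_le (by positivity)
            (hcount _ measurableSet_ball measure_ball_lt_top.ne).2 N

theorem measure_le_ncard_vNeighbours2_le [IsProbabilityMeasure P] (hη : IsPoissonProcess P η γ)
    (hγ : 0 < γ) (hd : 1 ≤ d) (hs : closedBall 0 3 ⊆ ⋃ t ∈ s, ball t (1 / 5)) (n : ℕ) :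
    P {ω | n ≤ (vNeighbours2 (insert 0 (η ω)) 0).ncard} ≤
      ENNReal.ofReal ((s.card + 4) * (1 - (16 : ℝ) ^ (-(d : ℤ))) ^ n) := by
  set q := 1 - (16 : ℝ) ^ (-(d : ℤ))
  cases n with
  | zero =>
    rw [pow_zero, mul_one]
    exact prob_le_one.trans (ENNReal.one_le_ofReal.2 (by linarith [s.card.cast_nonneg (α := ℝ)]))
  | succ N =>
  obtain ⟨ρ, hρ, hvol⟩ := exists_pos_toReal_measure_ball_eq volume (by simp; omega) (0 : Euc d)
    (by positivity : (0 : ℝ) < ((N : ℝ) + 1) / 2 / γ)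
  obtain ⟨r, hr, rfl⟩ : ∃ r, 0 < r ∧ ρ = 4 * r := ⟨ρ / 4, by positivity, by ring⟩
  have hbig : γ * (volume (ball (0 : Euc d) (4 * r))).toReal = ((N : ℝ) + 1) / 2 := by
    rw [hvol]
    field_simp
  have hsmall (t : Euc d) :
      γ * (volume (ball (r • t) (4 / 5 * r))).toReal = (1 / 5) ^ d * (((N : ℝ) + 1) / 2) := by
    rw [← hbig, show 4 / 5 * r = 1 / 5 * (4 * r) by ring,
      Measure.addHaar_ball_mul_of_pos volume _ (by norm_num), ENNReal.toReal_mul,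
      ENNReal.toReal_ofReal (by positivity), finrank_euclideanSpace_fin]
    ring
  refine (hη.measure_le_ncard_vNeighbours2_le_of_radius hγ.le hs hr N).trans ?_
  simp_rw [hsmall, hbig]
  have hempty : exp (-((1 / 5) ^ d * (((N : ℝ) + 1) / 2))) ≤ q ^ (N + 1) := by
    calc exp (-((1 / 5) ^ d * (((N : ℝ) + 1) / 2))) = exp (-((1 / 5) ^ d / 2)) ^ (N + 1) := by
          rw [← exp_nat_mul]; push_cast; ring_nf
      _ ≤ q ^ (N + 1) := pow_le_pow_left₀ (exp_nonneg _) (exp_neg_le_one_sub_sixteen_zpow hd) _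
  have htail : 2 * exp (((N : ℝ) + 1) / 2) / 2 ^ N ≤ 4 * q ^ (N + 1) := by
    calc 2 * exp (((N : ℝ) + 1) / 2) / 2 ^ N = 4 * (exp (1 / 2) / 2) ^ (N + 1) := by
          rw [div_pow, ← exp_nat_mul, pow_succ]; push_cast; field_simp; ring_nf
      _ ≤ 4 * q ^ (N + 1) := by
          gcongr
          exact exp_half_div_two_le_one_sub_sixteen_zpow hd
  calc ∑ t ∈ s, ENNReal.ofReal (exp (-((1 / 5) ^ d * (((N : ℝ) + 1) / 2)))) +
        ENNReal.ofReal (2 * exp (((N : ℝ) + 1) / 2) / 2 ^ N)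
      ≤ ∑ t ∈ s, ENNReal.ofReal (q ^ (N + 1)) + ENNReal.ofReal (4 * q ^ (N + 1)) := by
        gcongr
    _ = ENNReal.ofReal ((s.card + 4) * q ^ (N + 1)) := by
        have hq : 0 ≤ q ^ (N + 1) :=
          pow_nonneg ((exp_pos _).le.trans (exp_neg_le_one_sub_sixteen_zpow hd)) _
        rw [Finset.sum_const, nsmul_eq_mul, ← ENNReal.ofReal_natCast,
          ← ENNReal.ofReal_mul (by positivity),
          ← ENNReal.ofReal_add (by positivity) (by positivity)]
        ring_nf

end IsPoissonProcess

/-- **Exponential tail and moments of the second-order Voronoi neighbourhood of the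
origin in a Poisson process.** There is a constant `l` depending only on `d` such that
for every stationary Poisson process `η` with intensity `γ > 0` and all `n ≥ 2`,
`ℙ(|N₂(η⁰, 0)| ≥ n) ≤ l (1 - 16^{-d})^{n-1}`; consequently all moments of
`|N₂(η⁰, 0)|` are finite. -/
theorem poisson_voronoi_second_order_neighbourhood (d : ℕ) (hd : 1 ≤ d) :
    ∃ l : ℝ, 0 < l ∧
      ∀ (Ω : Type) (_ : MeasurableSpace Ω) (P : Measure Ω), IsProbabilityMeasure P →
      ∀ γ : ℝ, 0 < γ →
      ∀ η : Ω → Set (Euc d), IsPoissonProcess P η γ →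
        (∀ n : ℕ, 2 ≤ n →
          P {ω | n ≤ (vNeighbours2 (insert 0 (η ω)) 0).ncard}
            ≤ ENNReal.ofReal (l * (1 - (16 : ℝ) ^ (-(d : ℤ))) ^ (n - 1))) ∧
        (∀ m : ℕ, ∫⁻ ω, ((vNeighbours2 (insert 0 (η ω)) 0).ncard : ℝ≥0∞) ^ m ∂P ≠ ∞) := by
  obtain ⟨s, -, hs_fin, hs⟩ := finite_cover_balls_of_compact (isCompact_closedBall (0 : Euc d) 3)
    (by norm_num : (0 : ℝ) < 1 / 5)
  lift s to Finset (Euc d) using hs_fin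
  have hq0 : 0 ≤ 1 - (16 : ℝ) ^ (-(d : ℤ)) :=
    (exp_pos _).le.trans (exp_neg_le_one_sub_sixteen_zpow hd)
  have hq1 : 1 - (16 : ℝ) ^ (-(d : ℤ)) < 1 := sub_lt_self _ (zpow_pos (by norm_num) _)
  refine ⟨s.card + 4, by positivity, fun Ω _ P _ γ hγ η hη => ⟨fun n _ => ?_, ?_⟩⟩
  · refine (hη.measure_le_ncard_vNeighbours2_le hγ hd (by simpa using hs) n).trans ?_
    exact ENNReal.ofReal_le_ofReal (mul_le_mul_of_nonneg_left
      (pow_le_pow_of_le_one hq0 hq1.le (Nat.sub_le n 1)) (by positivity))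
  · exact lintegral_pow_ne_top_of_tail_le hq0 hq1
      (hη.measure_le_ncard_vNeighbours2_le hγ hd (by simpa using hs))
end
end
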